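/- arXiv:2411.14875 — 7 statements merged into one kernel-verified Lean document; each statement's English description precedes it below -/
import Mathlib

section
/- Let λ₂ ≥ 0. If β* ∈ ℝ^p is a local minimizer of F (i.e., there exists δ > 0 such that F(β*) ≤ F(β) for all β ∈ ℝ^p with ‖β − β*‖₂ < δ), then β* is a generalized first-order stationary point of F: there exists a subgradient v of z ↦ ‖z − y‖_r at Xβ* such that β*_i · (Xᵀv)_i + 2λ₂ (β*_i)² + λ₁ q |β*_i|^q = 0 for every i = 1,…,p. -/
/-- Index for the ℓ_r norm with r ∈ {1, 2, ∞}. -/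
inductive LrIndex : Type
  | one | two | inf

/-- The ℓ_r norm on ℝ^n for r ∈ {1, 2, ∞}. -/
noncomputable def lrNorm {n : ℕ} (r : LrIndex) (z : Fin n → ℝ) : ℝ :=
  match r with
  | .one => ∑ j, |z j|
  | .two => Real.sqrt (∑ j, (z j) ^ 2)
  | .inf => ⨆ j, |z j|

/-- `v` is a subgradient of `z ↦ ‖z − y‖_r` at `z₀`. -/
def IsSubgradAt {n : ℕ} (r : LrIndex) (y v z₀ : Fin n → ℝ) : Prop :=
  ∀ z : Fin n → ℝ,
    lrNorm r (z₀ - y) + ∑ j, v j * (z j - z₀ j) ≤ lrNorm r (z - y)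

/-- The objective F(β) = ‖Xβ − y‖_r + λ₂‖β‖₂² + λ₁ Σᵢ |βᵢ|^q. -/
noncomputable def objF {n p : ℕ} (r : LrIndex) (X : Matrix (Fin n) (Fin p) ℝ)
    (y : Fin n → ℝ) (lam1 lam2 q : ℝ) (β : Fin p → ℝ) : ℝ :=
  lrNorm r (X.mulVec β - y) + lam2 * ∑ i, (β i) ^ 2 + lam1 * ∑ i, |β i| ^ q

/-- `β` is a generalized first-order stationary point of F. -/
def IsGenStat {n p : ℕ} (r : LrIndex) (X : Matrix (Fin n) (Fin p) ℝ)
    (y : Fin n → ℝ) (lam1 lam2 q : ℝ) (β : Fin p → ℝ) : Prop :=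
  ∃ v : Fin n → ℝ, IsSubgradAt r y v (X.mulVec β) ∧
    ∀ i : Fin p,
      β i * (∑ j, X j i * v j) + 2 * lam2 * (β i) ^ 2 + lam1 * q * |β i| ^ q = 0

/-! Perturb `β*` multiplicatively, `β = β* ⊙ (1 + s t)`: zero coordinates stay fixed, so the
penalty becomes differentiable in `s`, and local minimality gives
`-(w ⬝ t) ≤ g'(Xβ*; X(β* ⊙ t))` with `wᵢ = 2λ₂β*ᵢ² + λ₁q|β*ᵢ|^q`, where `g'` is the one-sided
directional derivative of the convex loss `g`. That derivative is sublinear and bounded by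
`g (x + u) - g x`, so Hahn–Banach extends `X(β* ⊙ t) ↦ -(w ⬝ t)` to a linear functional below
`g'`, which is the required subgradient. -/

open Set Matrix

def LrIndex.exponent : LrIndex → ENNReal
  | .one => 1
  | .two => 2
  | .inf => ⊤

lemma lrNorm_eq_norm_toLp {n : ℕ} (r : LrIndex) (z : Fin n → ℝ) :
    lrNorm r z = ‖WithLp.toLp r.exponent z‖ := by
  cases r with
  | one => rw [LrIndex.exponent, PiLp.norm_eq_of_L1]; simp [lrNorm]
  | two => rw [LrIndex.exponent, EuclideanSpace.norm_eq]; simp [lrNorm]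
  | inf => rw [LrIndex.exponent, PiLp.norm_eq_ciSup]; simp [lrNorm]

lemma convexOn_lrNorm_sub {n : ℕ} (r : LrIndex) (y : Fin n → ℝ) :
    ConvexOn ℝ univ (fun z => lrNorm r (z - y)) := by
  have : Fact (1 ≤ r.exponent) := ⟨by cases r <;> simp [LrIndex.exponent]⟩
  have h := ((convexOn_norm convex_univ).comp_linearMap
    (WithLp.linearEquiv r.exponent ℝ (Fin n → ℝ)).symm.toLinearMap).translate_right (-y)
  simpa [lrNorm_eq_norm_toLp, Function.comp_def, sub_eq_neg_add] using h

lemma IsLocalMinOn.nonneg_of_hasDerivWithinAt_Ioi {f : ℝ → ℝ} {a f' : ℝ}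
    (hmin : IsLocalMinOn f (Ioi a) a) (hf : HasDerivWithinAt f f' (Ioi a) a) : 0 ≤ f' := by
  have h1 : (1 : ℝ) ∈ posTangentConeAt (Ioi a) a := by
    simp [one_mem_posTangentConeAt_iff_mem_closure]
  simpa using hmin.hasFDerivWithinAt_nonneg hf.hasFDerivWithinAt h1

section RightLineDeriv

variable {E : Type*} [AddCommGroup E] [Module ℝ E] {g : E → ℝ}

noncomputable def rightLineDeriv (g : E → ℝ) (x u : E) : ℝ :=
  derivWithin (fun s : ℝ => g (x + s • u)) (Ioi 0) 0

namespace ConvexOn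

lemma comp_line (hg : ConvexOn ℝ univ g) (x u : E) :
    ConvexOn ℝ univ (fun s : ℝ => g (x + s • u)) := by
  simpa [Function.comp_def] using
    (hg.translate_right x).comp_linearMap (LinearMap.toSpanSingleton ℝ E u)

lemma hasDerivWithinAt_rightLineDeriv (hg : ConvexOn ℝ univ g) (x u : E) :
    HasDerivWithinAt (fun s : ℝ => g (x + s • u)) (rightLineDeriv g x u) (Ioi 0) 0 :=
  (hg.comp_line x u).hasDerivWithinAt_rightDeriv_of_mem_interior (by simp)

lemma rightLineDeriv_le_sub (hg : ConvexOn ℝ univ g) (x u : E) :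
    rightLineDeriv g x u ≤ g (x + u) - g x := by
  simpa [slope, rightLineDeriv] using
    (hg.comp_line x u).rightDeriv_le_slope_of_mem_interior (x := 0) (by simp) (mem_univ 1) one_pos

lemma rightLineDeriv_smul (hg : ConvexOn ℝ univ g) (x u : E) {c : ℝ} (hc : 0 < c) :
    rightLineDeriv g x (c • u) = c * rightLineDeriv g x u := by
  have h := (hg.hasDerivWithinAt_rightLineDeriv x u).comp_of_eq (0 : ℝ)
    (hasDerivAt_mul_const c).hasDerivWithinAt (s := Ioi 0) (fun _ hs => mul_pos hs hc)
    (zero_mul c).symm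
  refine (HasDerivWithinAt.derivWithin ?_ (uniqueDiffWithinAt_Ioi 0)).trans (mul_comm _ _)
  simpa only [Function.comp_def, smul_smul] using h

lemma rightLineDeriv_add_le (hg : ConvexOn ℝ univ g) (x : E) (u v : E) :
    rightLineDeriv g x (u + v) ≤ rightLineDeriv g x u + rightLineDeriv g x v := by
  set ρ : ℝ → ℝ := fun s => (g (x + s • (2 : ℝ) • u) + g (x + s • (2 : ℝ) • v)) / 2
  have hρ : HasDerivWithinAt ρ (rightLineDeriv g x u + rightLineDeriv g x v) (Ioi 0) 0 := by
    have h := ((hg.hasDerivWithinAt_rightLineDeriv x ((2 : ℝ) • u)).add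
      (hg.hasDerivWithinAt_rightLineDeriv x ((2 : ℝ) • v))).div_const 2
    rw [hg.rightLineDeriv_smul x u two_pos, hg.rightLineDeriv_smul x v two_pos] at h
    rwa [show ∀ a b : ℝ, (2 * a + 2 * b) / 2 = a + b by intros; ring] at h
  -- `g (x + s • (u + v)) ≤ ρ s` with equality at `s = 0`, so the right derivatives compare
  have hle : ∀ s : ℝ, g (x + s • (u + v)) ≤ ρ s := by
    intro s
    have h := hg.2 (mem_univ (x + s • (2 : ℝ) • u)) (mem_univ (x + s • (2 : ℝ) • v))
      (by norm_num : (0 : ℝ) ≤ 1 / 2) (by norm_num : (0 : ℝ) ≤ 1 / 2) (by norm_num)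
    have e : x + s • (u + v)
        = (1 / 2 : ℝ) • (x + s • (2 : ℝ) • u) + (1 / 2 : ℝ) • (x + s • (2 : ℝ) • v) := by
      module
    rw [e]
    refine h.trans_eq ?_
    simp only [ρ, smul_eq_mul]
    ring
  have h0 : ρ 0 = g (x + (0 : ℝ) • (u + v)) := by simp [ρ]
  have hmin : IsLocalMinOn (fun s => ρ s - g (x + s • (u + v))) (Ioi 0) 0 :=
    Filter.Eventually.of_forall fun s => by
      simp only [h0, sub_self, sub_nonneg]
      exact hle s
  simpa using hmin.nonneg_of_hasDerivWithinAt_Ioi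
    (hρ.sub (hg.hasDerivWithinAt_rightLineDeriv x (u + v)))

end ConvexOn

end RightLineDeriv

theorem exists_dual_comp_eq_of_le_sublinear {E F : Type*} [AddCommGroup E] [Module ℝ E]
    [AddCommGroup F] [Module ℝ F] (N : E → ℝ)
    (N_hom : ∀ c : ℝ, 0 < c → ∀ x, N (c • x) = c * N x) (N_add : ∀ x y, N (x + y) ≤ N x + N y)
    (M : F →ₗ[ℝ] E) (w : F →ₗ[ℝ] ℝ) (hw : ∀ t, w t ≤ N (M t)) :
    ∃ v : E →ₗ[ℝ] ℝ, (∀ x, v x ≤ N x) ∧ v ∘ₗ M = w := by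
  have N_zero : N 0 = 0 := by
    have h := N_hom 2 two_pos 0
    rw [smul_zero] at h
    linarith
  have hker : LinearMap.ker M ≤ LinearMap.ker w := fun t ht => by
    rw [LinearMap.mem_ker] at ht ⊢
    have h₁ := hw t
    have h₂ := hw (-t)
    simp only [map_neg, ht, neg_zero, N_zero] at h₁ h₂
    linarith
  let f : E →ₗ.[ℝ] ℝ :=
    ⟨LinearMap.range M, (LinearMap.ker M).liftQ w hker ∘ₗ M.quotKerEquivRange.symm.toLinearMap⟩
  have hf : ∀ t, f ⟨M t, LinearMap.mem_range_self M t⟩ = w t := fun t => by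
    have h : M.quotKerEquivRange.symm ⟨M t, LinearMap.mem_range_self M t⟩
        = Submodule.Quotient.mk t :=
      (LinearEquiv.symm_apply_eq _).2 (Subtype.ext (M.quotKerEquivRange_apply_mk t).symm)
    simp [f, h]
  obtain ⟨v, hvf, hvN⟩ := exists_extension_of_le_sublinear f N N_hom N_add <| by
    rintro ⟨_, t, rfl⟩
    exact (hf t).trans_le (hw t)
  exact ⟨v, hvN, LinearMap.ext fun t => (hvf ⟨M t, LinearMap.mem_range_self M t⟩).trans (hf t)⟩

theorem ConvexOn.exists_subgradient_vecMul_eq {m k : Type*} [Fintype m] [DecidableEq m]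
    [Fintype k] [DecidableEq k] {g : (m → ℝ) → ℝ} (hg : ConvexOn ℝ univ g) (x : m → ℝ)
    (A : Matrix m k ℝ) (w : k → ℝ) (hw : ∀ t, w ⬝ᵥ t ≤ rightLineDeriv g x (A *ᵥ t)) :
    ∃ v : m → ℝ, (∀ z, g x + v ⬝ᵥ (z - x) ≤ g z) ∧ v ᵥ* A = w := by
  obtain ⟨ℓ, hℓN, hℓA⟩ := exists_dual_comp_eq_of_le_sublinear (rightLineDeriv g x)
    (fun c hc u => hg.rightLineDeriv_smul x u hc) (hg.rightLineDeriv_add_le x)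
    A.mulVecLin (dotProductEquiv ℝ k w) hw
  set v := (dotProductEquiv ℝ m).symm ℓ
  have hv : ∀ u, v ⬝ᵥ u = ℓ u :=
    LinearMap.congr_fun ((dotProductEquiv ℝ m).apply_symm_apply ℓ)
  refine ⟨v, fun z => ?_, ?_⟩
  · have h := (hℓN (z - x)).trans (hg.rightLineDeriv_le_sub x (z - x))
    rw [add_sub_cancel, ← hv] at h
    linarith
  · ext i
    have h := LinearMap.congr_fun hℓA (Pi.single i 1)
    simp only [LinearMap.coe_comp, Function.comp_apply, Matrix.mulVecLin_apply,
      Matrix.mulVec_single_one, dotProductEquiv_apply_apply, dotProduct_single_one] at h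
    rw [← hv] at h
    exact h

section Penalty

variable {ι : Type*} [Fintype ι]

noncomputable def penalty (lam1 lam2 q : ℝ) (β : ι → ℝ) : ℝ :=
  lam2 * ∑ i, β i ^ 2 + lam1 * ∑ i, |β i| ^ q

-- `β i` times the `i`-th partial derivative of the penalty, meaningful also where `β i = 0`
noncomputable def scaledPenaltyDeriv (lam1 lam2 q : ℝ) (β : ι → ℝ) : ι → ℝ :=
  fun i => 2 * lam2 * β i ^ 2 + lam1 * q * |β i| ^ q

lemma hasDerivAt_add_mul_mul_sq (b τ : ℝ) :
    HasDerivAt (fun s : ℝ => (b + s * (b * τ)) ^ 2) (2 * b ^ 2 * τ) 0 := by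
  refine ((((hasDerivAt_id' (0 : ℝ)).mul_const (b * τ)).const_add b).fun_pow 2).congr_deriv ?_
  simp only [zero_mul, add_zero]
  ring

lemma hasDerivAt_abs_add_mul_mul_rpow (b τ q : ℝ) :
    HasDerivAt (fun s : ℝ => |b + s * (b * τ)| ^ q) (q * |b| ^ q * τ) 0 := by
  have hfactor : (fun s : ℝ => |b + s * (b * τ)| ^ q) = fun s => |b| ^ q * |1 + s * τ| ^ q := by
    funext s
    rw [← Real.mul_rpow (abs_nonneg b) (abs_nonneg _), ← abs_mul]
    ring_nf
  have hline : HasDerivAt (fun s : ℝ => |1 + s * τ|) τ 0 := by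
    have h := (hasDerivAt_abs (one_ne_zero' ℝ)).comp_of_eq (0 : ℝ)
      (((hasDerivAt_id' (0 : ℝ)).mul_const τ).const_add 1) (by simp)
    simpa [Function.comp_def] using h
  rw [hfactor]
  refine ((hline.rpow_const (Or.inl (by simp))).const_mul (|b| ^ q)).congr_deriv ?_
  simp only [zero_mul, add_zero, abs_one, Real.one_rpow]
  ring

lemma hasDerivAt_penalty_add_smul_mul (lam1 lam2 q : ℝ) (β t : ι → ℝ) :
    HasDerivAt (fun s : ℝ => penalty lam1 lam2 q (β + s • (β * t)))
      (scaledPenaltyDeriv lam1 lam2 q β ⬝ᵥ t) 0 := by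
  have hsq := HasDerivAt.fun_sum (u := Finset.univ) fun i _ =>
    hasDerivAt_add_mul_mul_sq (β i) (t i)
  have hrpow := HasDerivAt.fun_sum (u := Finset.univ) fun i _ =>
    hasDerivAt_abs_add_mul_mul_rpow (β i) (t i) q
  refine ((hsq.const_mul lam2).add (hrpow.const_mul lam1)).congr_deriv ?_
  simp only [dotProduct, scaledPenaltyDeriv, Finset.mul_sum, ← Finset.sum_add_distrib]
  exact Finset.sum_congr rfl fun i _ => by ring

end Penalty

lemma isLocalMin_of_forall_sqrt_sum_sq_lt {ι : Type*} [Fintype ι] {f : (ι → ℝ) → ℝ}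
    {β : ι → ℝ} {δ : ℝ} (hδ : 0 < δ) (h : ∀ b, √(∑ i, (b i - β i) ^ 2) < δ → f β ≤ f b) :
    IsLocalMin f β := by
  have hc : Continuous fun b : ι → ℝ => √(∑ i, (b i - β i) ^ 2) := by fun_prop
  have hδ' : √(∑ i, (β i - β i) ^ 2) < δ := by simpa using hδ
  exact ((hc.tendsto β).eventually (gt_mem_nhds hδ')).mono h

lemma IsLocalMin.neg_scaledPenaltyDeriv_dotProduct_le {m ι : Type*} [Fintype m] [Fintype ι]
    [DecidableEq ι] {g : (m → ℝ) → ℝ} (hg : ConvexOn ℝ univ g) {X : Matrix m ι ℝ}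
    {lam1 lam2 q : ℝ} {β : ι → ℝ}
    (hmin : IsLocalMin (fun b => g (X *ᵥ b) + penalty lam1 lam2 q b) β) (t : ι → ℝ) :
    -scaledPenaltyDeriv lam1 lam2 q β ⬝ᵥ t ≤
      rightLineDeriv g (X *ᵥ β) ((X * diagonal β) *ᵥ t) := by
  have hdir : (X * diagonal β) *ᵥ t = X *ᵥ (β * t) := by
    rw [← mulVec_mulVec]
    congr 1
    ext i
    simp [mulVec_diagonal]
  have hline : IsLocalMin (fun s : ℝ =>
      g (X *ᵥ β + s • X *ᵥ (β * t)) + penalty lam1 lam2 q (β + s • (β * t))) 0 := by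
    have h := IsLocalMin.comp_continuous (g := fun s : ℝ => β + s • (β * t)) (b := 0)
      (by simpa using hmin) (by fun_prop)
    simpa [Function.comp_def, mulVec_add, mulVec_smul] using h
  have hderiv := (hg.hasDerivWithinAt_rightLineDeriv (X *ᵥ β) (X *ᵥ (β * t))).add
    (hasDerivAt_penalty_add_smul_mul lam1 lam2 q β t).hasDerivWithinAt
  have h := (hline.on (Ioi 0)).nonneg_of_hasDerivWithinAt_Ioi hderiv
  rw [hdir, neg_dotProduct]
  linarith

theorem local_min_is_gen_stationary_general {n p : ℕ}
    (r : LrIndex) (X : Matrix (Fin n) (Fin p) ℝ) (y : Fin n → ℝ)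
    (lam1 lam2 q : ℝ) (βs : Fin p → ℝ)
    (hmin : ∃ δ : ℝ, 0 < δ ∧ ∀ β : Fin p → ℝ,
      Real.sqrt (∑ i, (β i - βs i) ^ 2) < δ →
      objF r X y lam1 lam2 q βs ≤ objF r X y lam1 lam2 q β) :
    IsGenStat r X y lam1 lam2 q βs := by
  obtain ⟨δ, hδ, hδmin⟩ := hmin
  have hloc : IsLocalMin (fun β => lrNorm r (X *ᵥ β - y) + penalty lam1 lam2 q β) βs :=
    isLocalMin_of_forall_sqrt_sum_sq_lt hδ fun β hβ => by
      simpa only [objF, penalty, add_assoc] using hδmin β hβ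
  obtain ⟨v, hsub, hvA⟩ := (convexOn_lrNorm_sub r y).exists_subgradient_vecMul_eq (X *ᵥ βs)
    (X * diagonal βs) _ (hloc.neg_scaledPenaltyDeriv_dotProduct_le (convexOn_lrNorm_sub r y))
  refine ⟨v, hsub, fun i => ?_⟩
  have hi := congrFun hvA i
  rw [← vecMul_vecMul, vecMul_diagonal] at hi
  simp only [scaledPenaltyDeriv, Pi.neg_apply, vecMul, dotProduct] at hi
  rw [Finset.sum_congr rfl fun j _ => mul_comm (X j i) (v j)]
  linear_combination hi

/-- every local minimizer of F is a generalized first-order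
stationary point of F. -/
theorem local_min_is_gen_stationary {n p : ℕ} (hn : 0 < n) (hp : 0 < p)
    (r : LrIndex) (X : Matrix (Fin n) (Fin p) ℝ) (y : Fin n → ℝ)
    (lam1 lam2 q : ℝ) (hlam1 : 0 < lam1) (hlam2 : 0 ≤ lam2)
    (hq0 : 0 < q) (hq1 : q < 1) (βs : Fin p → ℝ)
    (hmin : ∃ δ : ℝ, 0 < δ ∧ ∀ β : Fin p → ℝ,
      Real.sqrt (∑ i, (β i - βs i) ^ 2) < δ →
      objF r X y lam1 lam2 q βs ≤ objF r X y lam1 lam2 q β) :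
    IsGenStat r X y lam1 lam2 q βs :=
  local_min_is_gen_stationary_general r X y lam1 lam2 q βs hmin
end

section
/- Assume λ₂ > 0 and X_i ≠ 0 for every column i. If β* ∈ ℝ^p is a generalized first-order stationary point of F, then for every i with β*_i ≠ 0 one has |β*_i| > (q λ₁ / ‖X_i‖_r)^{1/(1−q)}. -/
lemma lrNorm_two_eq {n : ℕ} (z : Fin n → ℝ) :
    lrNorm .two z = ‖(WithLp.equiv 2 (Fin n → ℝ)).symm z‖ := by
  rw [EuclideanSpace.norm_eq]
  simp [lrNorm, Real.norm_eq_abs, sq_abs]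

lemma lrNorm_add_le {n : ℕ} (hn : 0 < n) (r : LrIndex) (a b : Fin n → ℝ) :
    lrNorm r (a + b) ≤ lrNorm r a + lrNorm r b := by
  cases r
  · calc ∑ j, |(a + b) j| ≤ ∑ j, (|a j| + |b j|) :=
          Finset.sum_le_sum (fun j _ => abs_add_le (a j) (b j))
      _ = (∑ j, |a j|) + ∑ j, |b j| := Finset.sum_add_distrib
  · rw [lrNorm_two_eq, lrNorm_two_eq, lrNorm_two_eq]
    exact norm_add_le _ _
  · have hne : Nonempty (Fin n) := ⟨⟨0, hn⟩⟩
    apply ciSup_le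
    intro j
    calc |(a + b) j| ≤ |a j| + |b j| := abs_add_le _ _
      _ ≤ (⨆ k, |a k|) + ⨆ k, |b k| :=
          add_le_add (le_ciSup (f := fun k => |a k|) (Finite.bddAbove_range _) j)
            (le_ciSup (f := fun k => |b k|) (Finite.bddAbove_range _) j)

lemma lrNorm_neg {n : ℕ} (r : LrIndex) (z : Fin n → ℝ) :
    lrNorm r (-z) = lrNorm r z := by
  cases r <;> simp [lrNorm]

lemma lrNorm_pos {n : ℕ} (r : LrIndex) {z : Fin n → ℝ} (hz : z ≠ 0) :
    0 < lrNorm r z := by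
  obtain ⟨j, hj⟩ : ∃ j, z j ≠ 0 := by
    by_contra h; push_neg at h; exact hz (funext h)
  cases r
  · exact Finset.sum_pos' (fun k _ => abs_nonneg _)
      ⟨j, Finset.mem_univ j, abs_pos.2 hj⟩
  · exact Real.sqrt_pos.2 (Finset.sum_pos' (fun k _ => sq_nonneg _)
      ⟨j, Finset.mem_univ j, by positivity⟩)
  · exact lt_of_lt_of_le (abs_pos.2 hj) (le_ciSup (f := fun k => |z k|) (Finite.bddAbove_range _) j)

lemma dot_le_lrNorm {n : ℕ} (hn : 0 < n) (r : LrIndex) (y v z₀ : Fin n → ℝ)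
    (h : IsSubgradAt r y v z₀) (w : Fin n → ℝ) :
    ∑ j, v j * w j ≤ lrNorm r w := by
  have h1 := h (z₀ + w)
  have h3 : ∑ j, v j * ((z₀ + w) j - z₀ j) = ∑ j, v j * w j := by
    apply Finset.sum_congr rfl; intro j _; simp
  rw [h3] at h1
  have h2 : lrNorm r (z₀ + w - y) ≤ lrNorm r (z₀ - y) + lrNorm r w := by
    have he : z₀ + w - y = (z₀ - y) + w := by
      funext j; simp; ring
    rw [he]; exact lrNorm_add_le hn r _ _
  linarith

/-- lower bound for the nonzero entries of a generalized
first-order stationary point of F. -/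
theorem gen_stationary_lower_bound {n p : ℕ} (hn : 0 < n) (hp : 0 < p)
    (r : LrIndex) (X : Matrix (Fin n) (Fin p) ℝ) (y : Fin n → ℝ)
    (lam1 lam2 q : ℝ) (hlam1 : 0 < lam1) (hlam2 : 0 < lam2)
    (hq0 : 0 < q) (hq1 : q < 1)
    (hX : ∀ i : Fin p, (fun j => X j i) ≠ (0 : Fin n → ℝ))
    (βs : Fin p → ℝ) (hstat : IsGenStat r X y lam1 lam2 q βs) :
    ∀ i : Fin p, βs i ≠ 0 →
      (q * lam1 / lrNorm r (fun j => X j i)) ^ (1 / (1 - q)) < |βs i| := by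
  intro i hi
  obtain ⟨v, hv, hst⟩ := hstat
  set N := lrNorm r (fun j => X j i) with hN
  have hNpos : 0 < N := lrNorm_pos r (hX i)
  set c := ∑ j, X j i * v j with hc
  have hc1 : c ≤ N := by
    have := dot_le_lrNorm hn r _ _ _ hv (fun j => X j i)
    calc c = ∑ j, v j * X j i := Finset.sum_congr rfl (fun j _ => mul_comm _ _)
      _ ≤ N := this
  have hc2 : -c ≤ N := by
    have h := dot_le_lrNorm hn r _ _ _ hv (fun j => -X j i)
    have he : (fun j => -X j i) = -(fun j => X j i) := rfl
    rw [he, lrNorm_neg] at h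
    calc -c = ∑ j, v j * (-X j i) := by
          rw [hc, ← Finset.sum_neg_distrib]
          exact Finset.sum_congr rfl (fun j _ => by ring)
      _ ≤ N := h
  have hcabs : |c| ≤ N := abs_le.2 ⟨by linarith, hc1⟩
  set b := |βs i| with hb
  have hbpos : 0 < b := abs_pos.2 hi
  have heq := hst i
  have hbq : (0:ℝ) < b ^ q := Real.rpow_pos_of_pos hbpos q
  -- lam1 * q * b ^ q < b * N
  have hkey : lam1 * q * b ^ q < b * N := by
    have h1 : -(βs i * c) ≤ b * |c| := by
      calc -(βs i * c) ≤ |βs i * c| := neg_le_abs _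
        _ = b * |c| := abs_mul _ _
    have h2 : b * |c| ≤ b * N := by
      exact mul_le_mul_of_nonneg_left hcabs (le_of_lt hbpos)
    have h3 : 0 < 2 * lam2 * (βs i) ^ 2 := by positivity
    nlinarith [heq]
  -- deduce q * lam1 / N < b ^ (1 - q)
  have hlt : q * lam1 / N < b ^ (1 - q) := by
    rw [div_lt_iff₀ hNpos, Real.rpow_sub hbpos, Real.rpow_one]
    rw [div_mul_eq_mul_div, lt_div_iff₀ hbq]
    nlinarith
  have hqlN : (0:ℝ) ≤ q * lam1 / N := by positivity
  have hexp : (0:ℝ) < 1 / (1 - q) := by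
    have : (0:ℝ) < 1 - q := by linarith
    positivity
  have : (q * lam1 / N) ^ (1 / (1 - q)) < (b ^ (1 - q)) ^ (1 / (1 - q)) :=
    Real.rpow_lt_rpow hqlN hlt hexp
  have hbb : (b ^ (1 - q)) ^ (1 / (1 - q)) = b := by
    rw [← Real.rpow_mul (le_of_lt hbpos)]
    rw [mul_one_div, div_self (by linarith : (1:ℝ) - q ≠ 0)]
    simp [Real.rpow_one]
  rw [hbb] at this
  exact this
end

section
/- Let 0 < q < 1, u > 0 and t ∈ ℝ. Set s₀ = |t|^{q−1} if |t| ≥ u^{1/(q−1)} and s₀ = u otherwise, and set h = |t|^q if |t| ≥ u^{1/(q−1)} and h = q·u·|t| + (1−q)·u^{q/(q−1)} otherwise. Then 0 < s₀ ≤ u, h = q(|t|·s₀ − ((q−1)/q)·s₀^{q/(q−1)}), and q(|t|·s − ((q−1)/q)·s^{q/(q−1)}) ≥ h for every s with 0 < s ≤ u; that is, h is the least element of the set { q(|t|·s − ((q−1)/q)·s^{q/(q−1)}) : 0 < s ≤ u }. -/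
/-!
Write `p = q / (q - 1) < 0` and `D_a(s) = dualObjective q a s = q a s + (1 - q) s ^ p`.
Weighted AM–GM with weights `1 - q` and `q` gives `b ^ p ≤ D_c(s)` for `c = b ^ (1 / (q - 1))`,
with equality at `s = b`, so `s = b` minimises `D_c` on `(0, ∞)`. For `a = |t| ≥ u ^ (1 / (q - 1))`
the unconstrained minimiser `b = a ^ (q - 1)` lies in `(0, u]` and the minimum is `a ^ q`.
Otherwise `a ≤ c := u ^ (1 / (q - 1))`, and `D_a(s) - D_a(u) = (D_c(s) - D_c(u)) + q (c - a) (u - s)`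
is nonnegative on `(0, u]`.
-/

open Real

noncomputable section

def dualObjective (q a s : ℝ) : ℝ := q * (a * s - ((q - 1) / q) * s ^ (q / (q - 1)))

lemma dualObjective_eq {q : ℝ} (hq : q ≠ 0) (a s : ℝ) :
    dualObjective q a s = q * a * s + (1 - q) * s ^ (q / (q - 1)) := by
  unfold dualObjective
  field_simp
  ring

lemma rpow_one_div_sub_one_mul_self {q b : ℝ} (hq : q ≠ 1) (hb : 0 < b) :
    b ^ (1 / (q - 1)) * b = b ^ (q / (q - 1)) := by
  have hq' : q - 1 ≠ 0 := sub_ne_zero.2 hq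
  rw [← rpow_add_one hb.ne']
  congr 1
  field_simp
  ring

lemma dualObjective_rpow_one_div_sub_one_le {q b s : ℝ} (hq0 : 0 < q) (hq1 : q < 1)
    (hb : 0 < b) (hs : 0 < s) :
    dualObjective q (b ^ (1 / (q - 1))) b ≤ dualObjective q (b ^ (1 / (q - 1))) s := by
  have hq' : q - 1 ≠ 0 := by linarith
  rw [dualObjective_eq hq0.ne', dualObjective_eq hq0.ne', mul_assoc,
    rpow_one_div_sub_one_mul_self hq1.ne hb]
  have amgm := geom_mean_le_arith_mean2_weighted (sub_nonneg.2 hq1.le) hq0.le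
    (rpow_pos_of_pos hs (q / (q - 1))).le (mul_pos (rpow_pos_of_pos hb (1 / (q - 1))) hs).le
    (by ring)
  have hpow : (s ^ (q / (q - 1))) ^ (1 - q) * (b ^ (1 / (q - 1)) * s) ^ q = b ^ (q / (q - 1)) := by
    rw [mul_rpow (rpow_pos_of_pos hb _).le hs.le, ← rpow_mul hs.le, ← rpow_mul hb.le,
      mul_left_comm, ← rpow_add hs]
    have hexp : q / (q - 1) * (1 - q) + q = 0 := by field_simp; ring
    rw [hexp, rpow_zero, mul_one, one_div_mul_eq_div]
  linarith

lemma dualObjective_rpow_sub_one {q a : ℝ} (hq : q ≠ 0) (hq1 : q ≠ 1) (ha : 0 < a) :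
    dualObjective q a (a ^ (q - 1)) = a ^ q := by
  have hq' : q - 1 ≠ 0 := sub_ne_zero.2 hq1
  have hlin : a * a ^ (q - 1) = a ^ q := by
    rw [mul_comm, ← rpow_add_one ha.ne', sub_add_cancel]
  have hpow : (a ^ (q - 1)) ^ (q / (q - 1)) = a ^ q := by
    rw [← rpow_mul ha.le, mul_div_cancel₀ _ hq']
  rw [dualObjective_eq hq, mul_assoc, hlin, hpow]
  ring

lemma rpow_sub_one_le_of_rpow_one_div_sub_one_le {q u a : ℝ} (hq1 : q < 1) (hu : 0 < u)
    (ha : u ^ (1 / (q - 1)) ≤ a) : a ^ (q - 1) ≤ u :=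
  calc a ^ (q - 1) ≤ (u ^ (1 / (q - 1))) ^ (q - 1) :=
        rpow_le_rpow_of_nonpos (rpow_pos_of_pos hu _) ha (by linarith)
    _ = u := by rw [← rpow_mul hu.le, one_div_mul_cancel (by linarith), rpow_one]

lemma dualObjective_le_of_le_rpow_one_div_sub_one {q u a s : ℝ} (hq0 : 0 < q) (hq1 : q < 1)
    (hu : 0 < u) (ha : a ≤ u ^ (1 / (q - 1))) (hs : 0 < s) (hsu : s ≤ u) :
    dualObjective q a u ≤ dualObjective q a s := by
  have hmin := dualObjective_rpow_one_div_sub_one_le hq0 hq1 hu hs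
  simp only [dualObjective_eq hq0.ne'] at hmin ⊢
  nlinarith [mul_nonneg (mul_nonneg hq0.le (sub_nonneg.2 ha)) (sub_nonneg.2 hsu)]

end

/-- h_u(t) is the least value of s ↦ q(|t|s − ((q−1)/q)s^{q/(q−1)})
over 0 < s ≤ u, attained at s₀. -/
theorem hApprox_is_min (q u t : ℝ) (hq0 : 0 < q) (hq1 : q < 1) (hu : 0 < u)
    (s₀ h : ℝ)
    (hs₀ : s₀ = if u ^ (1 / (q - 1)) ≤ |t| then |t| ^ (q - 1) else u)
    (hh : h = if u ^ (1 / (q - 1)) ≤ |t| then |t| ^ q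
              else q * u * |t| + (1 - q) * u ^ (q / (q - 1))) :
    0 < s₀ ∧ s₀ ≤ u ∧
    h = q * (|t| * s₀ - ((q - 1) / q) * s₀ ^ (q / (q - 1))) ∧
    ∀ s : ℝ, 0 < s → s ≤ u →
      h ≤ q * (|t| * s - ((q - 1) / q) * s ^ (q / (q - 1))) := by
  change 0 < s₀ ∧ s₀ ≤ u ∧ h = dualObjective q |t| s₀ ∧
    ∀ s : ℝ, 0 < s → s ≤ u → h ≤ dualObjective q |t| s
  by_cases hc : u ^ (1 / (q - 1)) ≤ |t|
  · rw [if_pos hc] at hs₀ hh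
    subst hs₀ hh
    have ht : 0 < |t| := (rpow_pos_of_pos hu _).trans_le hc
    have hval := dualObjective_rpow_sub_one hq0.ne' hq1.ne ht
    refine ⟨rpow_pos_of_pos ht _, rpow_sub_one_le_of_rpow_one_div_sub_one_le hq1 hu hc,
      hval.symm, fun s hs _ => ?_⟩
    have hmin := dualObjective_rpow_one_div_sub_one_le hq0 hq1 (rpow_pos_of_pos ht (q - 1)) hs
    rwa [← rpow_mul ht.le, mul_one_div_cancel (by linarith), rpow_one, hval] at hmin
  · rw [if_neg hc] at hs₀ hh
    subst hs₀ hh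
    refine ⟨hu, le_rfl, by rw [dualObjective_eq hq0.ne']; ring, fun s hs hsu => ?_⟩
    have hmin := dualObjective_le_of_le_rpow_one_div_sub_one hq0 hq1 hu (not_le.1 hc).le hs hsu
    rwa [dualObjective_eq hq0.ne', mul_right_comm] at hmin
end

section
/- Let 0 < q < 1 and u > 0, and define h_u : ℝ → ℝ by h_u(t) = |t|^q if |t| ≥ u^{1/(q−1)} and h_u(t) = q·u·|t| + (1−q)·u^{q/(q−1)} otherwise. Then h_u is Lipschitz continuous with constant q·u: |h_u(t₁) − h_u(t₂)| ≤ q·u·|t₁ − t₂| for all t₁, t₂ ∈ ℝ. -/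
/-- The ε-approximation h_u of t ↦ |t|^q. -/
noncomputable def hApprox (q u t : ℝ) : ℝ :=
  if u ^ (1 / (q - 1)) ≤ |t| then |t| ^ q
  else q * u * |t| + (1 - q) * u ^ (q / (q - 1))

/-!
Writing `c = u ^ (1 / (q - 1))`, so that `u = c ^ (q - 1)` and `u ^ (q / (q - 1)) = c ^ q`, the
inner branch of `h_u` is the tangent line of `s ↦ s ^ q` at `s = c`; hence `h_u t = f |t|`, where `f`
is `s ^ q` for `s ≥ c` and its tangent at `c` below. By concavity every slope of `s ↦ s ^ q` on
`[c, ∞)` is at most the derivative `q c ^ (q - 1) = q u` at `c`, and `f` is nondecreasing, so `f` is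
`q u`-Lipschitz; composing with the `1`-Lipschitz map `|·|` gives the claim.
-/

/-- Bernoulli's inequality, applied at `s = a / b - 1`. -/
theorem Real.rpow_le_rpow_add_mul_sub {q a b : ℝ} (hq0 : 0 ≤ q) (hq1 : q ≤ 1) (ha : 0 ≤ a)
    (hb : 0 < b) : a ^ q ≤ b ^ q + q * b ^ (q - 1) * (a - b) := by
  have bernoulli := rpow_one_add_le_one_add_mul_self (s := a / b - 1)
    (by linarith [div_nonneg ha hb.le]) hq0 hq1
  rw [add_sub_cancel, Real.div_rpow ha hb.le, div_le_iff₀ (by positivity)] at bernoulli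
  rw [Real.rpow_sub_one hb.ne']
  calc a ^ q ≤ (1 + q * (a / b - 1)) * b ^ q := bernoulli
    _ = b ^ q + q * (b ^ q / b) * (a - b) := by field_simp

theorem Real.rpow_sub_rpow_le_mul_sub {q a b c : ℝ} (hq0 : 0 ≤ q) (hq1 : q ≤ 1) (hc : 0 < c)
    (hcb : c ≤ b) (hba : b ≤ a) : a ^ q - b ^ q ≤ q * c ^ (q - 1) * (a - b) := by
  have hb : 0 < b := hc.trans_le hcb
  have tangent := Real.rpow_le_rpow_add_mul_sub hq0 hq1 (hb.le.trans hba) hb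
  have slope : b ^ (q - 1) ≤ c ^ (q - 1) := Real.rpow_le_rpow_of_nonpos hc hcb (by linarith)
  have := mul_le_mul_of_nonneg_right (mul_le_mul_of_nonneg_left slope hq0) (sub_nonneg.2 hba)
  linarith

noncomputable def rpowTangentSplice (q c s : ℝ) : ℝ :=
  if c ≤ s then s ^ q else c ^ q + q * c ^ (q - 1) * (s - c)

theorem rpowTangentSplice_sub_mem_Icc {q c a b : ℝ} (hq0 : 0 ≤ q) (hq1 : q ≤ 1) (hc : 0 < c)
    (hba : b ≤ a) :
    rpowTangentSplice q c a - rpowTangentSplice q c b ∈ Set.Icc 0 (q * c ^ (q - 1) * (a - b)) := by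
  have slope_nonneg : 0 ≤ q * c ^ (q - 1) := mul_nonneg hq0 (Real.rpow_nonneg hc.le _)
  unfold rpowTangentSplice
  split_ifs with hca hcb hcb
  · exact ⟨sub_nonneg.2 (Real.rpow_le_rpow (hc.le.trans hcb) hba hq0),
      Real.rpow_sub_rpow_le_mul_sub hq0 hq1 hc hcb hba⟩
  · have lower := Real.rpow_le_rpow hc.le hca hq0
    have upper := Real.rpow_sub_rpow_le_mul_sub hq0 hq1 hc le_rfl hca
    constructor <;> nlinarith
  · exact absurd (hcb.trans hba) hca
  · constructor <;> nlinarith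

theorem abs_rpowTangentSplice_sub_le {q c : ℝ} (hq0 : 0 ≤ q) (hq1 : q ≤ 1) (hc : 0 < c)
    (a b : ℝ) :
    |rpowTangentSplice q c a - rpowTangentSplice q c b| ≤ q * c ^ (q - 1) * |a - b| := by
  wlog hba : b ≤ a generalizing a b
  · rw [abs_sub_comm, abs_sub_comm a]
    exact this b a (le_of_not_ge hba)
  obtain ⟨lower, upper⟩ := rpowTangentSplice_sub_mem_Icc hq0 hq1 hc hba
  rwa [abs_of_nonneg lower, abs_of_nonneg (sub_nonneg.2 hba)]

theorem hApprox_eq_rpowTangentSplice {q u : ℝ} (hq1 : q ≠ 1) (hu : 0 < u) (t : ℝ) :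
    hApprox q u t = rpowTangentSplice q (u ^ (1 / (q - 1))) |t| := by
  have slope : (u ^ (1 / (q - 1))) ^ (q - 1) = u := by
    rw [one_div, Real.rpow_inv_rpow hu.le (sub_ne_zero.2 hq1)]
  set c := u ^ (1 / (q - 1))
  have hc : 0 < c := Real.rpow_pos_of_pos hu _
  have value : c ^ q = u ^ (q / (q - 1)) := by
    rw [← Real.rpow_mul hu.le, one_div_mul_eq_div]
  have intercept : c ^ q = u * c := by
    rw [← slope, ← Real.rpow_add_one hc.ne', sub_add_cancel]
  unfold hApprox rpowTangentSplice
  split_ifs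
  · rfl
  · rw [slope, ← value]; linear_combination (-q) * intercept

/-- h_u is Lipschitz continuous with constant q·u. -/
theorem hApprox_lipschitz (q u : ℝ) (hq0 : 0 < q) (hq1 : q < 1) (hu : 0 < u) :
    ∀ t₁ t₂ : ℝ, |hApprox q u t₁ - hApprox q u t₂| ≤ q * u * |t₁ - t₂| := by
  intro t₁ t₂
  have slope : (u ^ (1 / (q - 1))) ^ (q - 1) = u := by
    rw [one_div, Real.rpow_inv_rpow hu.le (sub_ne_zero.2 hq1.ne)]
  rw [hApprox_eq_rpowTangentSplice hq1.ne hu, hApprox_eq_rpowTangentSplice hq1.ne hu]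
  calc _ ≤ q * u * |(|t₁| - |t₂|)| := by
        simpa only [slope] using abs_rpowTangentSplice_sub_le hq0.le hq1.le
          (Real.rpow_pos_of_pos hu (1 / (q - 1))) |t₁| |t₂|
    _ ≤ q * u * |t₁ - t₂| :=
        mul_le_mul_of_nonneg_left (abs_abs_sub_abs_le_abs_sub t₁ t₂) (mul_pos hq0 hu).le
end

section
/- Let λ₂ ≥ 0 and fix ε > 0. Given β ∈ ℝ^p, let w = w(β). If β' ∈ ℝ^p is a global minimizer of G_w, then F_ε(β') ≤ F_ε(β). -/
/-- Weighted objective G_w(β) = ‖Xβ − y‖_r + λ₂‖β‖₂² + qλ₁ Σᵢ wᵢ|βᵢ|. -/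
noncomputable def objG {n p : ℕ} (r : LrIndex) (X : Matrix (Fin n) (Fin p) ℝ)
    (y : Fin n → ℝ) (lam1 lam2 q : ℝ) (w : Fin p → ℝ) (β : Fin p → ℝ) : ℝ :=
  lrNorm r (X.mulVec β - y) + lam2 * ∑ i, (β i) ^ 2 + q * lam1 * ∑ i, w i * |β i|

/-- The ε-approximation objective F_ε. -/
noncomputable def objFeps {n p : ℕ} (r : LrIndex) (X : Matrix (Fin n) (Fin p) ℝ)
    (y : Fin n → ℝ) (lam1 lam2 q ε : ℝ) (β : Fin p → ℝ) : ℝ :=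
  lrNorm r (X.mulVec β - y) + lam2 * ∑ i, (β i) ^ 2
    + lam1 * ∑ i, hApprox q ((ε / (p * lam1)) ^ ((q - 1) / q)) (β i)

/-- The weight vector w(β) with w(β)ᵢ = u_ε if βᵢ = 0, and min(u_ε, |βᵢ|^{q−1}) otherwise. -/
noncomputable def weightVec {p : ℕ} (q uε : ℝ) (β : Fin p → ℝ) : Fin p → ℝ :=
  fun i => if β i = 0 then uε else min uε (|β i| ^ (q - 1))

/-- Tangent inequality for t ↦ t^q, 0<q<1: concavity. -/
lemma rpow_tangent_le {q : ℝ} (hq0 : 0 < q) (hq1 : q < 1) {x y : ℝ}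
    (hx : 0 < x) (hy : 0 ≤ y) :
    y ^ q ≤ x ^ q + q * x ^ (q - 1) * (y - x) := by
  have hgm : y ^ q * x ^ (1 - q) ≤ q * y + (1 - q) * x :=
    Real.geom_mean_le_arith_mean2_weighted hq0.le (by linarith) hy hx.le (by ring)
  have hxq1 : x ^ (1 - q) * x ^ (q - 1) = 1 := by
    rw [← Real.rpow_add hx]; norm_num
  have hxq2 : x * x ^ (q - 1) = x ^ q := by
    nth_rewrite 1 [← Real.rpow_one x]
    rw [← Real.rpow_add hx]; ring_nf
  have hpos : (0:ℝ) < x ^ (q - 1) := Real.rpow_pos_of_pos hx _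
  have h := mul_le_mul_of_nonneg_right hgm hpos.le
  calc y ^ q = y ^ q * x ^ (1 - q) * x ^ (q - 1) := by rw [mul_assoc, hxq1, mul_one]
    _ ≤ (q * y + (1 - q) * x) * x ^ (q - 1) := h
    _ = x ^ q + q * x ^ (q - 1) * (y - x) := by linear_combination hxq2

/-- Key majorization: h_u(t) ≤ h_u(s) + q·w(s)·(|t| − |s|). -/
lemma hApprox_majorize {q u : ℝ} (hq0 : 0 < q) (hq1 : q < 1) (hu : 0 < u) (s t : ℝ) :
    hApprox q u t ≤ hApprox q u s
      + q * (if s = 0 then u else min u (|s| ^ (q - 1))) * (|t| - |s|) := by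
  unfold hApprox
  set a := u ^ (1 / (q - 1)) with ha_def
  have ha : 0 < a := Real.rpow_pos_of_pos hu _
  have hq1' : q - 1 ≠ 0 := by linarith
  have hua : a ^ (q - 1) = u := by
    rw [ha_def, ← Real.rpow_mul hu.le, one_div, inv_mul_cancel₀ hq1', Real.rpow_one]
  have haq : u ^ (q / (q - 1)) = a ^ q := by
    rw [ha_def, ← Real.rpow_mul hu.le]
    congr 1; field_simp
  rw [haq]
  have hau : u * a = a ^ q := by
    rw [← hua]; nth_rewrite 2 [← Real.rpow_one a]
    rw [← Real.rpow_add ha]; ring_nf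
  have hau' : q * (u * a) = q * a ^ q := by rw [hau]
  -- tangent at a
  have tang_a : ∀ y : ℝ, 0 ≤ y → y ^ q ≤ q * u * y + (1 - q) * a ^ q := by
    intro y hy
    have h := rpow_tangent_le hq0 hq1 ha hy
    rw [hua] at h
    linarith [h, hau']
  set x := |s| with hx_def
  set yy := |t| with hy_def
  have hx : 0 ≤ x := abs_nonneg s
  have hy : 0 ≤ yy := abs_nonneg t
  by_cases hxa : a ≤ x
  · -- x ≥ a > 0 : weight is x^(q-1)
    have hx0 : 0 < x := lt_of_lt_of_le ha hxa
    have hs0 : s ≠ 0 := by simpa [hx_def, abs_eq_zero] using hx0.ne'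
    have hle : x ^ (q - 1) ≤ u := by
      rw [← hua]; exact Real.rpow_le_rpow_of_nonpos ha hxa (by linarith)
    have hwx : (if s = 0 then u else min u (x ^ (q - 1))) = x ^ (q - 1) := by
      rw [if_neg hs0, min_eq_right hle]
    rw [if_pos hxa, hwx]
    by_cases hya : a ≤ yy
    · rw [if_pos hya]; exact rpow_tangent_le hq0 hq1 hx0 hy
    · rw [if_neg hya]
      have h1 : a ^ q ≤ x ^ q + q * x ^ (q - 1) * (a - x) :=
        rpow_tangent_le hq0 hq1 hx0 ha.le
      have h2' : 0 ≤ q * (u - x ^ (q - 1)) * (a - yy) :=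
        mul_nonneg (mul_nonneg hq0.le (by linarith)) (by linarith [not_le.mp hya])
      linarith [h1, h2', hau']
  · -- 0 ≤ x < a : weight is u
    have hwx : (if s = 0 then u else min u (x ^ (q - 1))) = u := by
      by_cases hs0 : s = 0
      · rw [if_pos hs0]
      · rw [if_neg hs0]
        have hx0 : 0 < x := abs_pos.mpr hs0
        have hle : u ≤ x ^ (q - 1) := by
          rw [← hua]
          exact Real.rpow_le_rpow_of_nonpos hx0 (le_of_not_ge hxa) (by linarith)
        exact min_eq_left hle
    rw [if_neg hxa, hwx]
    by_cases hya : a ≤ yy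
    · rw [if_pos hya]
      have h := tang_a yy hy
      linarith [h]
    · rw [if_neg hya]; linarith

/-- one reweighted step does not increase F_ε. -/
theorem reweighted_step_decreases_Feps {n p : ℕ} (hn : 0 < n) (hp : 0 < p)
    (r : LrIndex) (X : Matrix (Fin n) (Fin p) ℝ) (y : Fin n → ℝ)
    (lam1 lam2 q ε : ℝ) (hlam1 : 0 < lam1) (hlam2 : 0 ≤ lam2)
    (hq0 : 0 < q) (hq1 : q < 1) (hε : 0 < ε)
    (β β' : Fin p → ℝ)
    (hmin : ∀ γ : Fin p → ℝ,
      objG r X y lam1 lam2 q (weightVec q ((ε / (p * lam1)) ^ ((q - 1) / q)) β) β'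
        ≤ objG r X y lam1 lam2 q (weightVec q ((ε / (p * lam1)) ^ ((q - 1) / q)) β) γ) :
    objFeps r X y lam1 lam2 q ε β' ≤ objFeps r X y lam1 lam2 q ε β := by
  set u : ℝ := (ε / (p * lam1)) ^ ((q - 1) / q) with hu_def
  have hu : 0 < u := Real.rpow_pos_of_pos
    (div_pos hε (mul_pos (by exact_mod_cast hp) hlam1)) _
  set w : Fin p → ℝ := weightVec q u β with hw_def
  have key : ∀ i : Fin p,
      hApprox q u (β' i) - q * w i * |β' i| ≤ hApprox q u (β i) - q * w i * |β i| := by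
    intro i
    have h := hApprox_majorize hq0 hq1 hu (β i) (β' i)
    have hwi : w i = if β i = 0 then u else min u (|β i| ^ (q - 1)) := rfl
    rw [← hwi] at h
    linarith
  have hsum : ∑ i, (hApprox q u (β' i) - q * w i * |β' i|)
      ≤ ∑ i, (hApprox q u (β i) - q * w i * |β i|) :=
    Finset.sum_le_sum fun i _ => key i
  have hG := hmin β
  unfold objFeps objG at *
  rw [Finset.sum_sub_distrib, Finset.sum_sub_distrib] at hsum
  have e1 : ∑ i, q * w i * |β' i| = ∑ i, w i * |β' i| * q := by
    apply Finset.sum_congr rfl; intro i _; ring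
  have e2 : ∑ i, q * w i * |β i| = ∑ i, w i * |β i| * q := by
    apply Finset.sum_congr rfl; intro i _; ring
  rw [e1, e2, ← Finset.sum_mul, ← Finset.sum_mul] at hsum
  have hmul := mul_le_mul_of_nonneg_left hsum hlam1.le
  nlinarith [hG, hmul]
end

section
/- Let 0 < q < 1 and u > 0, and define h_u : ℝ → ℝ by h_u(t) = |t|^q if |t| ≥ u^{1/(q−1)} and h_u(t) = q·u·|t| + (1−q)·u^{q/(q−1)} otherwise. Then h_u(t) ≥ |t|^q for every t ∈ ℝ, and equality h_u(t) = |t|^q holds if and only if |t| ≥ u^{1/(q−1)}. -/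
/-- h_u majorizes t ↦ |t|^q, with equality exactly when
|t| ≥ u^{1/(q−1)}. -/
theorem hApprox_ge_abs_rpow (q u : ℝ) (hq0 : 0 < q) (hq1 : q < 1) (hu : 0 < u) :
    ∀ t : ℝ, |t| ^ q ≤ hApprox q u t ∧
      (hApprox q u t = |t| ^ q ↔ u ^ (1 / (q - 1)) ≤ |t|) := by
  intro t
  set x := |t| with hxdef
  have hx0 : (0:ℝ) ≤ x := abs_nonneg t
  set a := u ^ (1 / (q - 1)) with hadef
  have ha0 : (0:ℝ) < a := Real.rpow_pos_of_pos hu _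
  have hq1' : q - 1 ≠ 0 := by linarith
  have haq1 : a ^ (q - 1) = u := by
    rw [hadef, ← Real.rpow_mul hu.le, one_div, inv_mul_cancel₀ hq1', Real.rpow_one]
  have haq : a ^ q = u ^ (q / (q - 1)) := by
    rw [hadef, ← Real.rpow_mul hu.le]
    ring_nf
  have key : x < a → x ^ q < q * u * x + (1 - q) * u ^ (q / (q - 1)) := by
    intro hxa
    have hs : -1 ≤ x / a - 1 := by
      have : 0 ≤ x / a := div_nonneg hx0 ha0.le
      linarith
    have hxa' : x / a < 1 := (div_lt_one ha0).mpr hxa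
    have hs' : x / a - 1 ≠ 0 := by linarith
    have h := rpow_one_add_lt_one_add_mul_self hs hs' hq0 hq1
    have h2 : (x / a) ^ q < 1 + q * (x / a - 1) := by
      have : (1:ℝ) + (x / a - 1) = x / a := by ring
      rwa [this] at h
    have h3 := mul_lt_mul_of_pos_left h2 (Real.rpow_pos_of_pos ha0 q)
    have hL : a ^ q * (x / a) ^ q = x ^ q := by
      rw [← Real.mul_rpow ha0.le (div_nonneg hx0 ha0.le),
        mul_div_cancel₀ _ ha0.ne']
    have hR : a ^ q * (1 + q * (x / a - 1))
        = q * u * x + (1 - q) * u ^ (q / (q - 1)) := by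
      have hdiv : a ^ q / a = a ^ (q - 1) := by
        rw [Real.rpow_sub ha0, Real.rpow_one]
      have : a ^ q * (1 + q * (x / a - 1))
          = q * (a ^ q / a) * x + (1 - q) * a ^ q := by
        field_simp
        ring
      rw [this, hdiv, haq1, haq]
    rw [hL, hR] at h3
    exact h3
  rw [hApprox]
  by_cases h : a ≤ x
  · rw [if_pos h]
    exact ⟨le_rfl, iff_of_true rfl h⟩
  · rw [if_neg h]
    have hk := key (not_le.mp h)
    exact ⟨hk.le, iff_of_false hk.ne' h⟩
end

section
/- Let λ₂ ≥ 0 and fix ε > 0. Let (β^k)_{k≥0} be a sequence in ℝ^p such that for every k, β^{k+1} is a global minimizer of G_{w(β^k)}. Then the sequence (F_ε(β^k))_{k≥0} is nonincreasing: F_ε(β^{k+1}) ≤ F_ε(β^k) for every k. -/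
/-! The smoothed penalty is `h_u(t) = φ(|t|)`, where `φ = rpowTangentBelow q T` is `x ^ q` on `[T, ∞)`,
`T = u ^ (1 / (q - 1))`, continued below `T` by its tangent line at `T`. By concavity of `x ^ q`,
`φ` lies below every tangent line of `x ^ q` at a point `c ≥ T`, and `w(β)ᵢ` is the slope
`c ^ (q - 1)` of the tangent at `c = max |βᵢ| T`. So `F_ε - G_{w(β)} = λ₁ Σᵢ (h_u(·ᵢ) - q w(β)ᵢ |·ᵢ|)`
is maximized at `β` itself, and a step decreasing `G_{w(βᵏ)}` decreases `F_ε`. -/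

open Finset

noncomputable def rpowTangent (q a x : ℝ) : ℝ :=
  a ^ q + q * a ^ (q - 1) * (x - a)

noncomputable def rpowTangentBelow (q T x : ℝ) : ℝ :=
  if T ≤ x then x ^ q else rpowTangent q T x

section Tangent

variable {q : ℝ}

theorem rpow_le_rpowTangent (hq0 : 0 ≤ q) (hq1 : q ≤ 1) {a b : ℝ} (ha : 0 < a) (hb : 0 ≤ b) :
    b ^ q ≤ rpowTangent q a b := by
  have bernoulli := rpow_one_add_le_one_add_mul_self (s := b / a - 1)
    (by linarith [div_nonneg hb ha.le]) hq0 hq1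
  rw [add_sub_cancel, Real.div_rpow hb ha.le, div_le_iff₀ (Real.rpow_pos_of_pos ha q)] at bernoulli
  calc b ^ q ≤ (1 + q * (b / a - 1)) * a ^ q := bernoulli
    _ = rpowTangent q a b := by
      rw [rpowTangent, Real.rpow_sub_one ha.ne']
      field_simp

theorem rpowTangent_le_rpowTangent (hq0 : 0 ≤ q) (hq1 : q ≤ 1) {T c x : ℝ} (hT : 0 < T)
    (hTc : T ≤ c) (hxT : x ≤ T) : rpowTangent q T x ≤ rpowTangent q c x := by
  have hvalue : T ^ q ≤ rpowTangent q c T := rpow_le_rpowTangent hq0 hq1 (hT.trans_le hTc) hT.le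
  have hslope : c ^ (q - 1) ≤ T ^ (q - 1) := Real.rpow_le_rpow_of_nonpos hT hTc (by linarith)
  have : q * T ^ (q - 1) * (x - T) ≤ q * c ^ (q - 1) * (x - T) :=
    mul_le_mul_of_nonpos_right (by gcongr) (by linarith)
  simp only [rpowTangent] at hvalue ⊢
  linarith

theorem rpowTangentBelow_le_rpowTangent (hq0 : 0 ≤ q) (hq1 : q ≤ 1) {T c x : ℝ} (hT : 0 < T)
    (hTc : T ≤ c) (hx : 0 ≤ x) : rpowTangentBelow q T x ≤ rpowTangent q c x := by
  unfold rpowTangentBelow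
  split_ifs with hTx
  · exact rpow_le_rpowTangent hq0 hq1 (hT.trans_le hTc) hx
  · exact rpowTangent_le_rpowTangent hq0 hq1 hT hTc (not_le.mp hTx).le

theorem rpowTangentBelow_add_slope_mul (q T a x : ℝ) :
    rpowTangentBelow q T a + q * max a T ^ (q - 1) * (x - a) = rpowTangent q (max a T) x := by
  unfold rpowTangentBelow rpowTangent
  rcases le_or_gt T a with hTa | haT
  · rw [if_pos hTa, max_eq_left hTa]
  · rw [if_neg (not_le.mpr haT), max_eq_right haT.le]
    ring

end Tangent

section Penalty

variable {q u : ℝ}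

theorem hApprox_eq_rpowTangentBelow (hq1 : q ≠ 1) (hu : 0 < u) (t : ℝ) :
    hApprox q u t = rpowTangentBelow q (u ^ (1 / (q - 1))) |t| := by
  set T := u ^ (1 / (q - 1))
  have hT : 0 < T := Real.rpow_pos_of_pos hu _
  have hq1' : q - 1 ≠ 0 := sub_ne_zero.mpr hq1
  have hu_eq : u = T ^ (q - 1) := by
    rw [← Real.rpow_mul hu.le, one_div_mul_cancel hq1', Real.rpow_one]
  have hTq : u ^ (q / (q - 1)) = T ^ q := by
    rw [← Real.rpow_mul hu.le]
    congr 1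
    field_simp
  have hTT : T ^ (q - 1) * T = T ^ q := by
    rw [← Real.rpow_add_one hT.ne', sub_add_cancel]
  unfold hApprox rpowTangentBelow rpowTangent
  split_ifs
  · rfl
  · rw [hTq, ← hTT, ← hu_eq]
    ring

/-- `Real.rpow` has `0 ^ (q - 1) = 0`, which is why `weightVec` needs a case `βᵢ = 0`;
the `max` form needs none. -/
theorem weightVec_eq_max_rpow (hq1 : q < 1) (hu : 0 < u) {p : ℕ} (β : Fin p → ℝ) (i : Fin p) :
    weightVec q u β i = max |β i| (u ^ (1 / (q - 1))) ^ (q - 1) := by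
  set T := u ^ (1 / (q - 1))
  have hT : 0 < T := Real.rpow_pos_of_pos hu _
  have hu_eq : u = T ^ (q - 1) := by
    rw [← Real.rpow_mul hu.le, one_div_mul_cancel (by linarith), Real.rpow_one]
  have hq1' : q - 1 ≤ 0 := by linarith
  unfold weightVec
  split_ifs with hβ
  · rw [hβ, abs_zero, max_eq_right hT.le, hu_eq]
  · rw [hu_eq]
    rcases le_total |β i| T with hβT | hTβ
    · rw [max_eq_right hβT, min_eq_left (Real.rpow_le_rpow_of_nonpos (abs_pos.mpr hβ) hβT hq1')]
    · rw [max_eq_left hTβ, min_eq_right (Real.rpow_le_rpow_of_nonpos hT hTβ hq1')]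

theorem hApprox_sub_weightVec_mul_le (hq0 : 0 < q) (hq1 : q < 1) (hu : 0 < u) {p : ℕ}
    (β β' : Fin p → ℝ) (i : Fin p) :
    hApprox q u (β' i) - q * weightVec q u β i * |β' i|
      ≤ hApprox q u (β i) - q * weightVec q u β i * |β i| := by
  rw [hApprox_eq_rpowTangentBelow hq1.ne hu, hApprox_eq_rpowTangentBelow hq1.ne hu,
    weightVec_eq_max_rpow hq1 hu]
  set T := u ^ (1 / (q - 1))
  have hT : 0 < T := Real.rpow_pos_of_pos hu _
  have key := rpowTangentBelow_le_rpowTangent hq0.le hq1.le hT (le_max_right |β i| T)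
    (abs_nonneg (β' i))
  rw [← rpowTangentBelow_add_slope_mul] at key
  linarith

end Penalty

section Objective

variable {n p : ℕ} (r : LrIndex) (X : Matrix (Fin n) (Fin p) ℝ) (y : Fin n → ℝ) (lam2 : ℝ)
  {lam1 q ε : ℝ}

theorem objFeps_sub_objG (w β : Fin p → ℝ) :
    objFeps r X y lam1 lam2 q ε β - objG r X y lam1 lam2 q w β
      = lam1 * ∑ i, (hApprox q ((ε / (p * lam1)) ^ ((q - 1) / q)) (β i) - q * w i * |β i|) := by
  simp only [objFeps, objG, sum_sub_distrib, mul_sub, mul_sum]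
  ring_nf

theorem objFeps_sub_objG_weightVec_le (hp : 0 < p) (hlam1 : 0 < lam1)
    (hq0 : 0 < q) (hq1 : q < 1) (hε : 0 < ε) (β β' : Fin p → ℝ) :
    objFeps r X y lam1 lam2 q ε β'
        - objG r X y lam1 lam2 q (weightVec q ((ε / (p * lam1)) ^ ((q - 1) / q)) β) β'
      ≤ objFeps r X y lam1 lam2 q ε β
        - objG r X y lam1 lam2 q (weightVec q ((ε / (p * lam1)) ^ ((q - 1) / q)) β) β := by
  have hu : 0 < (ε / (p * lam1)) ^ ((q - 1) / q) := by
    have : (0 : ℝ) < p := Nat.cast_pos.mpr hp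
    positivity
  rw [objFeps_sub_objG, objFeps_sub_objG]
  exact mul_le_mul_of_nonneg_left
    (sum_le_sum fun i _ => hApprox_sub_weightVec_mul_le hq0 hq1 hu β β' i) hlam1.le

end Objective

theorem Feps_nonincreasing_general {n p : ℕ} (hp : 0 < p)
    (r : LrIndex) (X : Matrix (Fin n) (Fin p) ℝ) (y : Fin n → ℝ)
    (lam1 lam2 q ε : ℝ) (hlam1 : 0 < lam1)
    (hq0 : 0 < q) (hq1 : q < 1) (hε : 0 < ε)
    (βseq : ℕ → Fin p → ℝ)
    (hseq : ∀ k : ℕ, ∀ β : Fin p → ℝ,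
      objG r X y lam1 lam2 q
          (weightVec q ((ε / (p * lam1)) ^ ((q - 1) / q)) (βseq k)) (βseq (k + 1))
        ≤ objG r X y lam1 lam2 q
          (weightVec q ((ε / (p * lam1)) ^ ((q - 1) / q)) (βseq k)) β) :
    ∀ k : ℕ,
      objFeps r X y lam1 lam2 q ε (βseq (k + 1)) ≤ objFeps r X y lam1 lam2 q ε (βseq k) := by
  intro k
  have hmajorize :=
    objFeps_sub_objG_weightVec_le r X y lam2 hp hlam1 hq0 hq1 hε (βseq k) (βseq (k + 1))
  linarith [hseq k (βseq k)]

/-- along the reweighted iterates, (F_ε(β^k)) is nonincreasing. -/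
theorem Feps_nonincreasing {n p : ℕ} (hn : 0 < n) (hp : 0 < p)
    (r : LrIndex) (X : Matrix (Fin n) (Fin p) ℝ) (y : Fin n → ℝ)
    (lam1 lam2 q ε : ℝ) (hlam1 : 0 < lam1) (hlam2 : 0 ≤ lam2)
    (hq0 : 0 < q) (hq1 : q < 1) (hε : 0 < ε)
    (βseq : ℕ → Fin p → ℝ)
    (hseq : ∀ k : ℕ, ∀ β : Fin p → ℝ,
      objG r X y lam1 lam2 q
          (weightVec q ((ε / (p * lam1)) ^ ((q - 1) / q)) (βseq k)) (βseq (k + 1))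
        ≤ objG r X y lam1 lam2 q
          (weightVec q ((ε / (p * lam1)) ^ ((q - 1) / q)) (βseq k)) β) :
    ∀ k : ℕ,
      objFeps r X y lam1 lam2 q ε (βseq (k + 1)) ≤ objFeps r X y lam1 lam2 q ε (βseq k) :=
  Feps_nonincreasing_general hp r X y lam1 lam2 q ε hlam1 hq0 hq1 hε βseq hseq
end
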